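/- For every positive integer n, C_2(n) := Σ_{k=1}^{n} (−1)^(k−1) · [2n, n−k] · k^2 equals (−1)^n · n(n+1) / (2(2n−3)). -/

import Mathlib

/-!
The summand `t k = (-1)^(k-1) [2n, n-k] k²` is hypergeometric in `k`, because
`[N, j+1] (j + 1/2) = [N, j] (N - j - 1/2)`. Gosper's algorithm finds a hypergeometric
antidifference `G k = (-1)^k (n - k + 1/2) k (k-1) / (2n-3) · [2n, n+1-k]` with
`t k = G (k+1) - G k`, which after dividing by `[2n, n-k]` is a polynomial identity.
The sum telescopes to `G (n+1) - G 1 = G (n+1)`, and `[2n, 0] = 1` gives the closed form.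
-/

open Finset

/-- Rising factorial `(x)_n = x(x+1)⋯(x+n-1)`. -/
noncomputable def rfact (x : ℝ) : ℕ → ℝ
  | 0 => 1
  | n + 1 => rfact x n * (x + n)

/-- The bracket coefficient `[n, k] = (1/2)_n / ((1/2)_k (1/2)_{n-k})`. -/
noncomputable def brkt (n k : ℕ) : ℝ :=
  rfact (1 / 2) n / (rfact (1 / 2) k * rfact (1 / 2) (n - k))

lemma rfact_pos {x : ℝ} (hx : 0 < x) : ∀ m : ℕ, 0 < rfact x m
  | 0 => one_pos
  | m + 1 => mul_pos (rfact_pos hx m) (by positivity)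

lemma brkt_zero_right (N : ℕ) : brkt N 0 = 1 := by
  rw [brkt, Nat.sub_zero, rfact, one_mul]
  exact div_self (rfact_pos one_half_pos N).ne'

lemma brkt_succ_right_mul {N j : ℕ} (h : j < N) :
    brkt N (j + 1) * (j + 1 / 2) = brkt N j * (N - j - 1 / 2) := by
  obtain ⟨i, rfl⟩ : ∃ i, N = j + 1 + i := ⟨N - (j + 1), by omega⟩
  have hi : j + 1 + i - j = i + 1 := by omega
  simp only [brkt, hi, Nat.add_sub_cancel_left, rfact]
  have hpos := rfact_pos (one_half_pos (α := ℝ))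
  have hrj := (hpos j).ne'
  have hri := (hpos i).ne'
  have hrN := (hpos (j + 1 + i)).ne'
  push_cast
  field_simp
  ring

noncomputable def C_two_antidiff (n k : ℕ) : ℝ :=
  (-1 : ℝ) ^ k * ((n : ℝ) - k + 1 / 2) * ((k : ℝ) * (k - 1)) / (2 * n - 3) *
    brkt (2 * n) (n + 1 - k)

lemma two_mul_natCast_sub_three_ne_zero (n : ℕ) : (2 : ℝ) * n - 3 ≠ 0 := by
  intro h
  have : ((2 * n : ℕ) : ℝ) = (3 : ℕ) := by push_cast; linarith
  have : 2 * n = 3 := by exact_mod_cast this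
  omega

lemma C_two_summand_eq_antidiff_sub {n k : ℕ} (hk : 1 ≤ k) (hkn : k ≤ n) :
    (-1 : ℝ) ^ (k - 1) * brkt (2 * n) (n - k) * (k : ℝ) ^ 2 =
      C_two_antidiff n (k + 1) - C_two_antidiff n k := by
  obtain ⟨l, rfl⟩ : ∃ l, k = l + 1 := ⟨k - 1, by omega⟩
  obtain ⟨j, rfl⟩ : ∃ j, n = l + 1 + j := ⟨n - (l + 1), by omega⟩
  have hratio := brkt_succ_right_mul (N := 2 * (l + 1 + j)) (j := j) (by omega)
  have h₁ : l + 1 + j + 1 - (l + 1) = j + 1 := by omega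
  have h₂ : l + 1 + j + 1 - (l + 1 + 1) = j := by omega
  simp only [C_two_antidiff, h₁, h₂, Nat.add_sub_cancel, Nat.add_sub_cancel_left]
  have hden : ((l : ℝ) + 1 + j) * 2 - 3 ≠ 0 := by
    simpa [mul_comm] using two_mul_natCast_sub_three_ne_zero (l + 1 + j)
  have hj : (j : ℝ) + 1 / 2 ≠ 0 := by positivity
  rw [eq_div_of_mul_eq hj hratio]
  push_cast
  field_simp
  ring

lemma C_two_antidiff_one (n : ℕ) : C_two_antidiff n 1 = 0 := by
  simp [C_two_antidiff]

lemma C_two_antidiff_succ_self (n : ℕ) :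
    C_two_antidiff n (n + 1) = (-1 : ℝ) ^ n * (n * (n + 1)) / (2 * (2 * n - 3)) := by
  have := two_mul_natCast_sub_three_ne_zero n
  rw [C_two_antidiff, Nat.sub_self, brkt_zero_right]
  push_cast
  field_simp
  ring

theorem C_two_eval_general (n : ℕ) :
    ∑ k ∈ Finset.Icc 1 n, (-1 : ℝ) ^ (k - 1) * brkt (2 * n) (n - k) * (k : ℝ) ^ 2 =
      (-1 : ℝ) ^ n * ((n : ℝ) * ((n : ℝ) + 1)) / (2 * (2 * (n : ℝ) - 3)) := by
  calc ∑ k ∈ Icc 1 n, (-1 : ℝ) ^ (k - 1) * brkt (2 * n) (n - k) * (k : ℝ) ^ 2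
      = ∑ k ∈ Icc 1 n, (C_two_antidiff n (k + 1) - C_two_antidiff n k) :=
        sum_congr rfl fun k hk => C_two_summand_eq_antidiff_sub (mem_Icc.1 hk).1 (mem_Icc.1 hk).2
    _ = C_two_antidiff n (n + 1) - C_two_antidiff n 1 := by
        rw [← Ico_add_one_right_eq_Icc, sum_Ico_sub _ (by omega)]
    _ = _ := by rw [C_two_antidiff_succ_self, C_two_antidiff_one, sub_zero]

theorem C_two_eval (n : ℕ) (hn : 0 < n) :
    ∑ k ∈ Finset.Icc 1 n, (-1 : ℝ) ^ (k - 1) * brkt (2 * n) (n - k) * (k : ℝ) ^ 2 =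
      (-1 : ℝ) ^ n * ((n : ℝ) * ((n : ℝ) + 1)) / (2 * (2 * (n : ℝ) - 3)) :=
  C_two_eval_general n
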